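/- Let f = a_0 + a_1x + ⋯ + a_nx^n ∈ ℤ[x] be a primitive polynomial of degree n ≥ 1, and set H_f = max_{0 ≤ i ≤ n−1} |a_i|/|a_n|. Suppose there exist natural numbers m, d, k, and j ≤ n, and a prime p not dividing d, such that m ≥ H_f + d + 1, f(m) = ±p^k d, gcd(k, j) = 1, p^k divides the integer f^{(i)}(m)/i! for each i = 0, …, j−1, and, in case k > 1, p does not divide the integer f^{(j)}(m)/j!. Then f is irreducible in ℤ[x]. -/

import Mathlib

open Polynomial




private def pv (p : ℕ) (x : ℤ) : ℕ := x.natAbs.factorization p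

private lemma pv_dvd_iff {p : ℕ} (hp : p.Prime) {x : ℤ} (hx : x ≠ 0) {t : ℕ} :
    (p : ℤ) ^ t ∣ x ↔ t ≤ pv p x := by
  rw [show ((p:ℤ)^t) = ((p^t : ℕ) : ℤ) by push_cast; ring, Int.natCast_dvd,
    Nat.Prime.pow_dvd_iff_le_factorization hp (Int.natAbs_ne_zero.mpr hx)]
  rfl

private lemma pv_mul {p : ℕ} {x y : ℤ} (hx : x ≠ 0) (hy : y ≠ 0) :
    pv p (x * y) = pv p x + pv p y := by
  unfold pv
  rw [Int.natAbs_mul, Nat.factorization_mul (Int.natAbs_ne_zero.mpr hx)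
    (Int.natAbs_ne_zero.mpr hy), Finsupp.add_apply]

private lemma dumas {p k j : ℕ} (hp : p.Prime) (hk : 0 < k) (hj : 1 ≤ j)
    (hgcd : Nat.gcd k j = 1)
    (G H : Polynomial ℤ) (hG0 : G.coeff 0 ≠ 0) (hH0 : H.coeff 0 ≠ 0)
    (haG : (p:ℤ) ∣ G.coeff 0) (haH : (p:ℤ) ∣ H.coeff 0)
    (hv0 : pv p ((G*H).coeff 0) = k)
    (hCi : ∀ i < j, (p:ℤ)^k ∣ (G*H).coeff i)
    (hCj : ¬ (p:ℤ) ∣ (G*H).coeff j) : False := by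
  have hGne : G ≠ 0 := fun h => hG0 (by simp [h])
  have hHne : H ≠ 0 := fun h => hH0 (by simp [h])
  set v : ℤ → ℕ := pv p with hv
  set wG : ℕ → ℕ := fun s => j * v (G.coeff s) + k * s with hwG
  set wH : ℕ → ℕ := fun s => j * v (H.coeff s) + k * s with hwH
  have hSG : G.support.Nonempty := Polynomial.nonempty_support_iff.mpr hGne
  have hSH : H.support.Nonempty := Polynomial.nonempty_support_iff.mpr hHne
  set μG : ℕ := G.support.inf' hSG wG with hμG
  set μH : ℕ := H.support.inf' hSH wH with hμH
  have hTGne : (G.support.filter (fun s => wG s = μG)).Nonempty := by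
    obtain ⟨i, hi, hieq⟩ := Finset.exists_mem_eq_inf' hSG wG
    exact ⟨i, Finset.mem_filter.mpr ⟨hi, hieq.symm⟩⟩
  have hTHne : (H.support.filter (fun s => wH s = μH)).Nonempty := by
    obtain ⟨i, hi, hieq⟩ := Finset.exists_mem_eq_inf' hSH wH
    exact ⟨i, Finset.mem_filter.mpr ⟨hi, hieq.symm⟩⟩
  set uG : ℕ := (G.support.filter (fun s => wG s = μG)).max' hTGne with huG
  set uH : ℕ := (H.support.filter (fun s => wH s = μH)).max' hTHne with huH
  have huGmem : uG ∈ G.support ∧ wG uG = μG := by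
    have := Finset.max'_mem _ hTGne
    rw [← huG] at this
    exact ⟨(Finset.mem_filter.mp this).1, (Finset.mem_filter.mp this).2⟩
  have huHmem : uH ∈ H.support ∧ wH uH = μH := by
    have := Finset.max'_mem _ hTHne
    rw [← huH] at this
    exact ⟨(Finset.mem_filter.mp this).1, (Finset.mem_filter.mp this).2⟩
  have hμGle : ∀ s ∈ G.support, μG ≤ wG s := fun s hs => Finset.inf'_le _ hs
  have hμHle : ∀ s ∈ H.support, μH ≤ wH s := fun s hs => Finset.inf'_le _ hs
  have hμGlt : ∀ s ∈ G.support, uG < s → μG < wG s := by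
    intro s hs hlt
    rcases lt_or_eq_of_le (hμGle s hs) with h | h
    · exact h
    · exfalso
      have : s ∈ G.support.filter (fun s => wG s = μG) :=
        Finset.mem_filter.mpr ⟨hs, h.symm⟩
      have := Finset.le_max' _ s this
      rw [← huG] at this; omega
  have hμHlt : ∀ s ∈ H.support, uH < s → μH < wH s := by
    intro s hs hlt
    rcases lt_or_eq_of_le (hμHle s hs) with h | h
    · exact h
    · exfalso
      have : s ∈ H.support.filter (fun s => wH s = μH) :=
        Finset.mem_filter.mpr ⟨hs, h.symm⟩
      have := Finset.le_max' _ s this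
      rw [← huH] at this; omega
  set N : ℕ := uG + uH with hN
  set V : ℕ := v (G.coeff uG) + v (H.coeff uH) with hV
  have hGuGne : G.coeff uG ≠ 0 := Polynomial.mem_support_iff.mp huGmem.1
  have hHuHne : H.coeff uH ≠ 0 := Polynomial.mem_support_iff.mp huHmem.1
  have hμsum : μG + μH = j * V + k * N := by
    rw [← huGmem.2, ← huHmem.2, hwG, hwH, hV, hN]; ring
  -- every non-distinguished term divisible by p^(V+1)
  have hterm : ∀ s t : ℕ, s + t = N → ¬(s = uG ∧ t = uH) →
      (p:ℤ)^(V+1) ∣ G.coeff s * H.coeff t := by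
    intro s t hst hne
    by_cases hGs : G.coeff s = 0
    · simp [hGs]
    by_cases hHt : H.coeff t = 0
    · simp [hHt]
    have hsm : s ∈ G.support := Polynomial.mem_support_iff.mpr hGs
    have htm : t ∈ H.support := Polynomial.mem_support_iff.mpr hHt
    have hsum : μG + μH + 1 ≤ wG s + wH t := by
      rcases lt_trichotomy s uG with h | h | h
      · have ht : uH < t := by omega
        have := hμHlt t htm ht
        have := hμGle s hsm
        omega
      · exact absurd ⟨h, by omega⟩ hne
      · have := hμGlt s hsm h
        have := hμHle t htm
        omega
    have hws : wG s + wH t = j * (v (G.coeff s) + v (H.coeff t)) + k * N := by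
      rw [hwG, hwH]; simp only []; rw [← hst]; ring
    have hkey : j * V + 1 ≤ j * (v (G.coeff s) + v (H.coeff t)) := by omega
    have hVlt : V + 1 ≤ v (G.coeff s) + v (H.coeff t) := by
      by_contra hcon
      push_neg at hcon
      have : v (G.coeff s) + v (H.coeff t) ≤ V := by omega
      have := Nat.mul_le_mul_left j this
      omega
    rw [pv_dvd_iff hp (mul_ne_zero hGs hHt), pv_mul hGs hHt]
    exact hVlt
  have hdistv : v (G.coeff uG * H.coeff uH) = V := by
    rw [hv, pv_mul hGuGne hHuHne, hV]
  have hdist : ¬ (p:ℤ)^(V+1) ∣ G.coeff uG * H.coeff uH := by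
    rw [pv_dvd_iff hp (mul_ne_zero hGuGne hHuHne), ← hv, hdistv]; omega
  -- compute valuation of coeff N
  have hmemN : (uG, uH) ∈ Finset.HasAntidiagonal.antidiagonal N := by
    rw [Finset.HasAntidiagonal.mem_antidiagonal]
  have hcoeffN : (G*H).coeff N =
      G.coeff uG * H.coeff uH +
      ∑ x ∈ (Finset.HasAntidiagonal.antidiagonal N).erase (uG, uH), G.coeff x.1 * H.coeff x.2 := by
    rw [Polynomial.coeff_mul, ← Finset.add_sum_erase _ _ hmemN]
  have hrest : (p:ℤ)^(V+1) ∣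
      ∑ x ∈ (Finset.HasAntidiagonal.antidiagonal N).erase (uG, uH), G.coeff x.1 * H.coeff x.2 := by
    apply Finset.dvd_sum
    intro x hx
    have hxmem := Finset.mem_of_mem_erase hx
    have hxne := Finset.ne_of_mem_erase hx
    rw [Finset.HasAntidiagonal.mem_antidiagonal] at hxmem
    apply hterm x.1 x.2 hxmem
    intro ⟨h1, h2⟩
    exact hxne (Prod.ext h1 h2)
  have hcNnd : ¬ (p:ℤ)^(V+1) ∣ (G*H).coeff N := by
    rw [hcoeffN]
    intro hdvd
    exact hdist (by
      have := dvd_sub hdvd hrest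
      simpa using this)
  have hcNne : (G*H).coeff N ≠ 0 := by
    intro h
    exact hcNnd (h ▸ dvd_zero _)
  have hcNd : (p:ℤ)^V ∣ (G*H).coeff N := by
    rw [hcoeffN]
    apply dvd_add
    · rw [pv_dvd_iff hp (mul_ne_zero hGuGne hHuHne), ← hv, hdistv]
    · exact dvd_trans (pow_dvd_pow _ (by omega)) hrest
  have hvN : v ((G*H).coeff N) = V := by
    have h1 := (pv_dvd_iff hp hcNne).mp hcNd
    have h2 : ¬ (V + 1 ≤ pv p ((G*H).coeff N)) := fun h =>
      hcNnd ((pv_dvd_iff hp hcNne).mpr h)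
    rw [hv]; omega
  -- basic coefficient facts
  have haGv : 1 ≤ v (G.coeff 0) := by
    rw [hv, ← pv_dvd_iff hp hG0 (t := 1)] ; simpa using haG
  have haHv : 1 ≤ v (H.coeff 0) := by
    rw [hv, ← pv_dvd_iff hp hH0 (t := 1)] ; simpa using haH
  have hsumk : v (G.coeff 0) + v (H.coeff 0) = k := by
    have h00 : (G*H).coeff 0 = G.coeff 0 * H.coeff 0 := Polynomial.mul_coeff_zero G H
    rw [← hv0, h00]
    exact (pv_mul hG0 hH0).symm
  have h0G : 0 ∈ G.support := Polynomial.mem_support_iff.mpr hG0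
  have h0H : 0 ∈ H.support := Polynomial.mem_support_iff.mpr hH0
  have hμGle0 : μG ≤ j * v (G.coeff 0) := by
    have := hμGle 0 h0G; rw [hwG] at this; simpa using this
  have hμHle0 : μH ≤ j * v (H.coeff 0) := by
    have := hμHle 0 h0H; rw [hwH] at this; simpa using this
  have hmain : j * V + k * N ≤ j * k := by
    have : j * v (G.coeff 0) + j * v (H.coeff 0) = j * k := by
      rw [← Nat.mul_add, hsumk]
    omega
  -- case analysis on N
  have hcjne : (G*H).coeff j ≠ 0 := fun h => hCj (h ▸ dvd_zero _)
  rcases Nat.lt_trichotomy N j with hNj | hNj | hNj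
  · rcases Nat.eq_zero_or_pos N with hN0 | hNpos
    · -- N = 0 : show p ∣ coeff j
      have huG0 : uG = 0 := by omega
      have huH0 : uH = 0 := by omega
      have hMjk : μG + μH = j * k := by
        rw [hμsum, hN0, hV, huG0, huH0, hsumk]; ring
      apply hCj
      rw [Polynomial.coeff_mul]
      apply Finset.dvd_sum
      intro x hx
      rw [Finset.HasAntidiagonal.mem_antidiagonal] at hx
      by_cases hGs : G.coeff x.1 = 0
      · simp [hGs]
      by_cases hHt : H.coeff x.2 = 0
      · simp [hHt]
      have hsm : x.1 ∈ G.support := Polynomial.mem_support_iff.mpr hGs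
      have htm : x.2 ∈ H.support := Polynomial.mem_support_iff.mpr hHt
      have hstrict : μG + μH + 1 ≤ wG x.1 + wH x.2 := by
        rcases Nat.eq_zero_or_pos x.1 with h1 | h1
        · have h2 : 0 < x.2 := by omega
          have := hμHlt x.2 htm (by omega)
          have := hμGle x.1 hsm
          omega
        · have := hμGlt x.1 hsm (by omega)
          have := hμHle x.2 htm
          omega
      have hws : wG x.1 + wH x.2 = j * (v (G.coeff x.1) + v (H.coeff x.2)) + k * j := by
        rw [hwG, hwH]; simp only []; rw [← hx]; ring
      have hcm : k * j = j * k := Nat.mul_comm k j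
      have h1 : 1 ≤ j * (v (G.coeff x.1) + v (H.coeff x.2)) := by omega
      have h2 : 1 ≤ v (G.coeff x.1) + v (H.coeff x.2) := by
        rcases Nat.eq_zero_or_pos (v (G.coeff x.1) + v (H.coeff x.2)) with h | h
        · rw [h] at h1; omega
        · omega
      have := (pv_dvd_iff hp (mul_ne_zero hGs hHt) (t := 1)).mpr
        (by rw [← hv, hv, pv_mul hGs hHt]; exact h2)
      simpa using this
    · -- 1 ≤ N < j
      have hdvdN := hCi N hNj
      have hkV : k ≤ V := by
        have := (pv_dvd_iff hp hcNne).mp hdvdN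
        rw [← hv, hvN] at this; exact this
      have h5 : j * k ≤ j * V := Nat.mul_le_mul_left j hkV
      have hkN : k ≤ k * N := Nat.le_mul_of_pos_right k hNpos
      omega
  · -- N = j
    have hvj : v ((G*H).coeff j) = 0 := by
      by_contra h
      have h1 : 1 ≤ v ((G*H).coeff j) := by omega
      exact hCj (by simpa using (pv_dvd_iff hp hcjne (t := 1)).mpr (by rw [← hv]; exact h1))
    have hV0 : V = 0 := by rw [← hvj, ← hNj, hvN]
    have hMkj : μG + μH = k * j := by rw [hμsum, hV0, hNj]; ring
    have hμGeq : μG = j * v (G.coeff 0) ∧ μH = j * v (H.coeff 0) := by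
      have h6 : j * v (G.coeff 0) + j * v (H.coeff 0) = j * k := by
        rw [← Nat.mul_add, hsumk]
      have hcm : k * j = j * k := Nat.mul_comm k j
      constructor <;> omega
    have hwuG : j * v (G.coeff uG) + k * uG = j * v (G.coeff 0) := by
      have := huGmem.2; rw [hwG] at this; rw [← hμGeq.1]; exact this
    have hsum0 : v (G.coeff uG) + v (H.coeff uH) = 0 := by rw [← hV]; exact hV0
    have hvuG0 : v (G.coeff uG) = 0 := Nat.eq_zero_of_add_eq_zero_right hsum0
    have hkuG : k * uG = j * v (G.coeff 0) := by
      rw [hvuG0] at hwuG; simpa using hwuG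
    have hjdvd : j ∣ uG := by
      have hjk : Nat.Coprime j k := Nat.coprime_comm.mp hgcd
      have : j ∣ k * uG := ⟨v (G.coeff 0), hkuG⟩
      exact (Nat.Coprime.dvd_of_dvd_mul_left hjk this)
    have huGle : uG ≤ j := by omega
    rcases Nat.eq_zero_or_pos uG with h | h
    · rw [h, Nat.mul_zero] at hkuG
      have : v (G.coeff 0) = 0 := by
        rcases Nat.eq_zero_or_pos (v (G.coeff 0)) with h' | h'
        · exact h'
        · exfalso
          have : 1 * 1 ≤ j * v (G.coeff 0) := Nat.mul_le_mul hj h'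
          omega
      omega
    · have huGj : uG = j :=
        le_antisymm huGle (Nat.le_of_dvd h hjdvd)
      rw [huGj] at hkuG
      have : v (G.coeff 0) = k :=
        (Nat.eq_of_mul_eq_mul_left (by omega : 0 < j)
          (by rw [← hkuG]; exact Nat.mul_comm j k)).symm
      omega
  · -- N > j
    have h7 : k * (j + 1) ≤ k * N := Nat.mul_le_mul_left k (by omega)
    have h8 : k * (j+1) = k * j + k := by ring
    have hcm : k * j = j * k := Nat.mul_comm k j
    omega



private lemma multiset_prod_gt {c : ℝ} (hc : 1 ≤ c) :
    ∀ (S : Multiset ℝ), S ≠ 0 → (∀ z ∈ S, c < z) → c < S.prod := by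
  intro S
  induction S using Multiset.induction with
  | empty => intro h; exact absurd rfl h
  | cons a s ih =>
    intro _ hall
    rw [Multiset.prod_cons]
    rcases eq_or_ne s 0 with hs | hs
    · subst hs; simpa using hall a (by simp)
    · have hsp : c < s.prod := ih hs (fun z hz => hall z (by simp [hz]))
      have ha : c < a := hall a (by simp)
      nlinarith

private lemma root_bound (f : Polynomial ℤ) (n : ℕ) (hn : 1 ≤ n) (hdeg : f.natDegree = n)
    (Hb : ℝ) (hH : ∀ i < n, ((|f.coeff i| : ℤ) : ℝ) ≤ Hb * ((|f.coeff n| : ℤ) : ℝ))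
    (hH0 : 0 ≤ Hb) (hAn : f.coeff n ≠ 0)
    (r : ℂ) (hr : (f.map (Int.castRingHom ℂ)).eval r = 0) :
    ‖r‖ < 1 + Hb := by
  by_contra hcon
  push_neg at hcon
  set x : ℝ := ‖r‖ with hx
  have hx1 : 1 ≤ x := le_trans (by linarith) hcon
  have hfC : (f.map (Int.castRingHom ℂ)).natDegree = n := by
    rw [Polynomial.natDegree_map_eq_of_injective (fun a b h => by simpa using h) f, hdeg]
  have heval := hr
  rw [Polynomial.eval_eq_sum_range, hfC] at heval
  simp only [Polynomial.coeff_map] at heval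
  rw [Finset.sum_range_succ] at heval
  have hmain : ((Int.castRingHom ℂ) (f.coeff n)) * r ^ n
      = - ∑ i ∈ Finset.range n, ((Int.castRingHom ℂ) (f.coeff i)) * r ^ i := by
    linear_combination heval
  have habs : ((|f.coeff n| : ℤ) : ℝ) * x ^ n
      ≤ ∑ i ∈ Finset.range n, ((|f.coeff i| : ℤ) : ℝ) * x ^ i := by
    have h1 : ‖((Int.castRingHom ℂ) (f.coeff n)) * r ^ n‖
        = ((|f.coeff n| : ℤ) : ℝ) * x ^ n := by
      simp [map_mul, map_pow, Int.cast_abs, hx]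
    have h2 : ‖∑ i ∈ Finset.range n, ((Int.castRingHom ℂ) (f.coeff i)) * r ^ i‖
        ≤ ∑ i ∈ Finset.range n, ((|f.coeff i| : ℤ) : ℝ) * x ^ i := by
      refine le_trans (norm_sum_le _ _) (Finset.sum_le_sum fun i _ => ?_)
      simp [map_mul, map_pow, Int.cast_abs, hx]
    calc ((|f.coeff n| : ℤ) : ℝ) * x ^ n = ‖_ * r ^ n‖ := h1.symm
      _ = ‖- ∑ i ∈ Finset.range n, ((Int.castRingHom ℂ) (f.coeff i)) * r ^ i‖ := by
          rw [hmain]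
      _ = ‖∑ i ∈ Finset.range n, ((Int.castRingHom ℂ) (f.coeff i)) * r ^ i‖ := by
          rw [norm_neg]
      _ ≤ _ := h2
  set A : ℝ := ((|f.coeff n| : ℤ) : ℝ) with hA
  have hApos : 0 < A := by
    have h' : 0 < |f.coeff n| := abs_pos.mpr hAn
    rw [hA]
    exact_mod_cast h'
  have hbound : A * x ^ n ≤ Hb * A * ∑ i ∈ Finset.range n, x ^ i := by
    calc A * x ^ n ≤ ∑ i ∈ Finset.range n, ((|f.coeff i| : ℤ) : ℝ) * x ^ i := habs
      _ ≤ ∑ i ∈ Finset.range n, Hb * A * x ^ i := by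
          refine Finset.sum_le_sum fun i hi => ?_
          have hxi : (0:ℝ) ≤ x ^ i := by positivity
          have := hH i (Finset.mem_range.mp hi)
          nlinarith
      _ = Hb * A * ∑ i ∈ Finset.range n, x ^ i := by rw [Finset.mul_sum]
  have hxn1 : (1:ℝ) ≤ x ^ n := one_le_pow₀ hx1
  rcases eq_or_lt_of_le hH0 with hHb0 | hHbpos
  · rw [← hHb0] at hbound
    simp at hbound
    nlinarith
  · have hxgt1 : 1 < x := by linarith
    have hgeom : ∑ i ∈ Finset.range n, x ^ i = (x ^ n - 1) / (x - 1) :=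
      geom_sum_eq (ne_of_gt hxgt1) n
    have hdivle : (x ^ n - 1) / (x - 1) ≤ (x ^ n - 1) / Hb := by
      apply div_le_div_of_nonneg_left (by linarith) hHbpos (by linarith)
    have : Hb * A * ((x ^ n - 1) / (x - 1)) ≤ A * (x ^ n - 1) := by
      calc Hb * A * ((x ^ n - 1) / (x - 1)) ≤ Hb * A * ((x ^ n - 1) / Hb) := by
            apply mul_le_mul_of_nonneg_left hdivle (by positivity)
        _ = A * (x ^ n - 1) := by field_simp
    rw [hgeom] at hbound
    nlinarith

private lemma eval_factor_gt {g : Polynomial ℤ} (hgd : 1 ≤ g.natDegree)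
    (B : ℝ) (m : ℕ)
    (hroots : ∀ r : ℂ, (g.map (Int.castRingHom ℂ)).eval r = 0 → ‖r‖ < B)
    (dd : ℝ) (hdd : 1 ≤ dd) (hm : B + dd ≤ (m : ℝ)) :
    dd < ((|g.eval (m : ℤ)| : ℤ) : ℝ) := by
  set gC : Polynomial ℂ := g.map (Int.castRingHom ℂ) with hgC
  have hdegC : gC.natDegree = g.natDegree :=
    Polynomial.natDegree_map_eq_of_injective (fun a b h => by simpa using h) g
  have hgCne : gC ≠ 0 := fun h => by
    rw [h] at hdegC; simp at hdegC; omega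
  have hsplits : gC.Splits := IsAlgClosed.splits gC
  have hfact := hsplits.eq_prod_roots
  have hcard : gC.roots.card = gC.natDegree := (Polynomial.splits_iff_card_roots).mp hsplits
  have hrne : gC.roots ≠ 0 := by
    intro h
    rw [h] at hcard
    simp at hcard
    omega
  -- evaluate at m
  have heval : gC.eval ((m : ℤ) : ℂ) = ((g.eval (m:ℤ) : ℤ) : ℂ) := by
    rw [hgC]
    exact_mod_cast Polynomial.eval_intCast_map (Int.castRingHom ℂ) g (m:ℤ)
  have hprod : ‖gC.eval ((m : ℤ) : ℂ)‖ =
      ‖gC.leadingCoeff‖ *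
        (gC.roots.map (fun a => ‖((m:ℤ):ℂ) - a‖)).prod := by
    conv_lhs => rw [hfact]
    rw [Polynomial.eval_mul, Polynomial.eval_C, norm_mul,
      Polynomial.eval_multiset_prod, (show ∀ s : Multiset ℂ, ‖s.prod‖ = (s.map norm).prod from
        fun s => map_multiset_prod (normHom : ℂ →*₀ ℝ) s), Multiset.map_map, Multiset.map_map]
    simp
  have hlcge : 1 ≤ ‖gC.leadingCoeff‖ := by
    have hgne : g ≠ 0 := fun h => by rw [h] at hgd; simp at hgd
    have hlc : gC.leadingCoeff = ((g.leadingCoeff : ℤ) : ℂ) := by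
      rw [Polynomial.leadingCoeff, hdegC, hgC, Polynomial.coeff_map]
      rfl
    rw [hlc, Complex.norm_intCast]
    have : g.leadingCoeff ≠ 0 := Polynomial.leadingCoeff_ne_zero.mpr hgne
    have h1 : 1 ≤ |g.leadingCoeff| := by have := abs_pos.mpr this; omega
    calc (1:ℝ) = ((1:ℤ):ℝ) := by norm_num
      _ ≤ ((|g.leadingCoeff|:ℤ):ℝ) := by exact_mod_cast h1
      _ = |((g.leadingCoeff:ℤ):ℝ)| := by push_cast; ring
  have hprodgt : dd < (gC.roots.map (fun a => ‖((m:ℤ):ℂ) - a‖)).prod := by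
    apply multiset_prod_gt hdd
    · intro h
      exact hrne (Multiset.map_eq_zero.mp h)
    · intro z hz
      rw [Multiset.mem_map] at hz
      obtain ⟨a, ha, rfl⟩ := hz
      have haroot : gC.eval a = 0 := by
        have := Polynomial.isRoot_of_mem_roots ha
        exact this
      have haB : ‖a‖ < B := hroots a haroot
      have h1 : ‖((m:ℤ):ℂ)‖ - ‖a‖ ≤ ‖((m:ℤ):ℂ) - a‖ :=
        norm_sub_norm_le _ _
      have h2 : ‖((m:ℤ):ℂ)‖ = (m:ℝ) := by
        push_cast
        exact Complex.norm_natCast m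
      linarith
  have final : dd < ‖gC.eval ((m : ℤ) : ℂ)‖ := by
    rw [hprod]
    have hpr0 : (0:ℝ) < (gC.roots.map (fun a => ‖((m:ℤ):ℂ) - a‖)).prod := by
      linarith
    nlinarith
  rw [heval, Complex.norm_intCast] at final
  calc dd < |((g.eval (m:ℤ) : ℤ) : ℝ)| := final
    _ = ((|g.eval (m:ℤ)| : ℤ) : ℝ) := by push_cast; ring


/-- If `f` is primitive of degree `n ≥ 1`, `p ∤ d` is prime,
`m ≥ H_f + d + 1`, `f(m) = ±pᵏd`, `gcd(k, j) = 1`, `pᵏ` divides the Hasse derivatives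
`f⁽ⁱ⁾(m)/i!` for `i = 0, …, j-1`, and (when `k > 1`) `p` does not divide `f⁽ʲ⁾(m)/j!`,
then `f` is irreducible in `ℤ[x]`. -/
theorem stmt_11 (f : Polynomial ℤ) (n : ℕ) (hn : 1 ≤ n) (hdeg : f.natDegree = n)
    (hprim : f.IsPrimitive)
    (m d k j : ℕ) (hm : 0 < m) (hd : 0 < d) (hk : 0 < k) (hj : 1 ≤ j) (hjn : j ≤ n)
    (p : ℕ) (hp : p.Prime) (hpd : ¬ (p ∣ d))
    (hmd : ((Finset.range n).sup' (Finset.nonempty_range_iff.mpr (by omega))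
        (fun i => (|f.coeff i| : ℝ) / |f.coeff n|)) + d + 1 ≤ (m : ℝ))
    (hval : f.eval (m : ℤ) = (p : ℤ) ^ k * d ∨ f.eval (m : ℤ) = -((p : ℤ) ^ k * d))
    (hgcd : Nat.gcd k j = 1)
    (hdiv : ∀ i < j, (p : ℤ) ^ k ∣ (Polynomial.hasseDeriv i f).eval (m : ℤ))
    (hnotdiv : 1 < k → ¬ ((p : ℤ) ∣ (Polynomial.hasseDeriv j f).eval (m : ℤ))) :
    Irreducible f := by
  have hfne : f ≠ 0 := fun h0 => by rw [h0] at hdeg; simp at hdeg; omega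
  have hAn : f.coeff n ≠ 0 := by
    rw [← hdeg]
    exact Polynomial.leadingCoeff_ne_zero.mpr hfne
  have hrne : (Finset.range n).Nonempty := Finset.nonempty_range_iff.mpr (by omega)
  set Hb : ℝ := (Finset.range n).sup' hrne (fun i => (|f.coeff i| : ℝ) / |f.coeff n|) with hHb
  have hmd' : Hb + d + 1 ≤ (m : ℝ) := hmd
  have hanR : (0:ℝ) < ((|f.coeff n| : ℤ) : ℝ) := by
    have : 0 < |f.coeff n| := abs_pos.mpr hAn
    exact_mod_cast this
  have hHle : ∀ i < n, ((|f.coeff i| : ℤ) : ℝ) ≤ Hb * ((|f.coeff n| : ℤ) : ℝ) := by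
    intro i hi
    have h1 := Finset.le_sup' (fun i => (|f.coeff i| : ℝ) / |f.coeff n|)
      (Finset.mem_range.mpr hi)
    rw [← hHb] at h1
    rw [div_le_iff₀ hanR] at h1
    calc ((|f.coeff i| : ℤ) : ℝ) = |((f.coeff i : ℤ) : ℝ)| := by push_cast; ring
      _ ≤ Hb * ((|f.coeff n| : ℤ) : ℝ) := h1
  have hH0 : 0 ≤ Hb := by
    have h1 := Finset.le_sup' (fun i => (|f.coeff i| : ℝ) / |f.coeff n|)
      (Finset.mem_range.mpr (show 0 < n by omega))
    rw [← hHb] at h1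
    have h2 : (0:ℝ) ≤ (|f.coeff 0| : ℝ) / |f.coeff n| := by positivity
    linarith
  constructor
  · exact Polynomial.not_isUnit_of_natDegree_pos f (by omega)
  intro g h hf
  by_contra hcon
  push_neg at hcon
  obtain ⟨hgu, hhu⟩ := hcon
  have hgne : g ≠ 0 := fun h0 => hfne (by rw [hf, h0, zero_mul])
  have hhne : h ≠ 0 := fun h0 => hfne (by rw [hf, h0, mul_zero])
  have hgd : 1 ≤ g.natDegree := by
    rcases Nat.eq_zero_or_pos g.natDegree with h0 | h0
    · exfalso
      have hdvd : Polynomial.C (g.coeff 0) ∣ f :=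
        ⟨h, by rw [hf, ← Polynomial.eq_C_of_natDegree_eq_zero h0]⟩
      exact hgu (by rw [Polynomial.eq_C_of_natDegree_eq_zero h0]
                    exact Polynomial.isUnit_C.mpr (hprim _ hdvd))
    · exact h0
  have hhd : 1 ≤ h.natDegree := by
    rcases Nat.eq_zero_or_pos h.natDegree with h0 | h0
    · exfalso
      have hdvd : Polynomial.C (h.coeff 0) ∣ f :=
        ⟨g, by rw [hf, ← Polynomial.eq_C_of_natDegree_eq_zero h0, mul_comm]⟩
      exact hhu (by rw [Polynomial.eq_C_of_natDegree_eq_zero h0]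
                    exact Polynomial.isUnit_C.mpr (hprim _ hdvd))
    · exact h0
  -- root bounds
  have hrootsf : ∀ r : ℂ, (f.map (Int.castRingHom ℂ)).eval r = 0 → ‖r‖ < 1 + Hb :=
    fun r hr => root_bound f n hn hdeg Hb hHle hH0 hAn r hr
  have hrootsg : ∀ r : ℂ, (g.map (Int.castRingHom ℂ)).eval r = 0 → ‖r‖ < 1 + Hb := by
    intro r hr
    apply hrootsf
    rw [hf, Polynomial.map_mul, Polynomial.eval_mul, hr, zero_mul]
  have hrootsh : ∀ r : ℂ, (h.map (Int.castRingHom ℂ)).eval r = 0 → ‖r‖ < 1 + Hb := by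
    intro r hr
    apply hrootsf
    rw [hf, Polynomial.map_mul, Polynomial.eval_mul, hr, mul_zero]
  have hm' : (1 + Hb) + (d:ℝ) ≤ (m:ℝ) := by push_cast at hmd' ⊢; linarith
  have hd1 : (1:ℝ) ≤ (d:ℝ) := by exact_mod_cast hd
  have hgm : (d:ℤ) < |g.eval (m:ℤ)| := by
    have := eval_factor_gt hgd (1 + Hb) m hrootsg (d:ℝ) hd1 hm'
    exact_mod_cast this
  have hhm : (d:ℤ) < |h.eval (m:ℤ)| := by
    have := eval_factor_gt hhd (1 + Hb) m hrootsh (d:ℝ) hd1 hm'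
    exact_mod_cast this
  set A0 : ℤ := g.eval (m:ℤ) with hA0
  set B0 : ℤ := h.eval (m:ℤ) with hB0
  have hABf : A0 * B0 = f.eval (m:ℤ) := by rw [hA0, hB0, hf, Polynomial.eval_mul]
  have hA0ne : A0 ≠ 0 := fun h0 => by rw [h0] at hgm; simp at hgm; omega
  have hB0ne : B0 ≠ 0 := fun h0 => by rw [h0] at hhm; simp at hhm; omega
  have hpint : Prime (p:ℤ) := Nat.prime_iff_prime_int.mp hp
  have hAdvdpd : A0 ∣ (p:ℤ)^k * d := by
    rcases hval with hv | hv
    · exact ⟨B0, by rw [← hv, ← hABf]⟩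
    · exact ⟨-B0, by rw [mul_neg, hABf, hv, neg_neg]⟩
  have hBdvdpd : B0 ∣ (p:ℤ)^k * d := by
    rcases hval with hv | hv
    · exact ⟨A0, by rw [← hv, ← hABf, mul_comm]⟩
    · refine ⟨-A0, ?_⟩
      rw [mul_neg, mul_comm B0 A0, hABf, hv, neg_neg]
  have hpint : Prime (p:ℤ) := Nat.prime_iff_prime_int.mp hp
  have hpA : (p:ℤ) ∣ A0 := by
    by_contra hnp
    have hcop : IsCoprime ((p:ℤ)) A0 := (Prime.coprime_iff_not_dvd hpint).mpr hnp
    have hcopk : IsCoprime A0 ((p:ℤ)^k) := (hcop.symm).pow_right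
    have hA0d : A0 ∣ (d:ℤ) := hcopk.dvd_of_dvd_mul_left hAdvdpd
    have := Int.le_of_dvd (by exact_mod_cast hd) ((abs_dvd _ _).mpr hA0d)
    omega
  have hpB : (p:ℤ) ∣ B0 := by
    by_contra hnp
    have hcop : IsCoprime ((p:ℤ)) B0 := (Prime.coprime_iff_not_dvd hpint).mpr hnp
    have hcopk : IsCoprime B0 ((p:ℤ)^k) := (hcop.symm).pow_right
    have hB0d : B0 ∣ (d:ℤ) := hcopk.dvd_of_dvd_mul_left hBdvdpd
    have := Int.le_of_dvd (by exact_mod_cast hd) ((abs_dvd _ _).mpr hB0d)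
    omega
  have hk2 : 1 < k := by
    by_contra hk1
    have hkeq : k = 1 := by omega
    have hpp : (p:ℤ) * (p:ℤ) ∣ A0 * B0 := mul_dvd_mul hpA hpB
    have hppd : (p:ℤ) * (p:ℤ) ∣ (p:ℤ) * d := by
      rcases hval with hv | hv
      · rw [hABf, hv, hkeq, pow_one] at hpp; exact hpp
      · rw [hABf, hv, hkeq, pow_one] at hpp; exact (dvd_neg).mp hpp
    have hpd' : (p:ℤ) ∣ (d:ℤ) :=
      (mul_dvd_mul_iff_left (by exact_mod_cast hp.ne_zero : (p:ℤ) ≠ 0)).mp hppd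
    exact hpd (by exact_mod_cast hpd')
  -- apply Dumas
  have htay : taylor (m:ℤ) f = taylor (m:ℤ) g * taylor (m:ℤ) h := by
    rw [hf, taylor_mul]
  refine dumas hp hk hj hgcd (taylor (m:ℤ) g) (taylor (m:ℤ) h) ?_ ?_ ?_ ?_ ?_ ?_ ?_
  · rw [taylor_coeff_zero]; exact hA0ne
  · rw [taylor_coeff_zero]; exact hB0ne
  · rw [taylor_coeff_zero]; exact hpA
  · rw [taylor_coeff_zero]; exact hpB
  · rw [← htay, taylor_coeff_zero]
    have hna : (f.eval (m:ℤ)).natAbs = p^k * d := by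
      rcases hval with hv | hv
      · rw [hv]
        rw [show ((p:ℤ)^k * (d:ℤ)) = ((p^k * d : ℕ) : ℤ) by push_cast; ring]
        exact Int.natAbs_natCast _
      · rw [hv, Int.natAbs_neg]
        rw [show ((p:ℤ)^k * (d:ℤ)) = ((p^k * d : ℕ) : ℤ) by push_cast; ring]
        exact Int.natAbs_natCast _
    unfold pv
    rw [hna, Nat.factorization_mul (pow_ne_zero k hp.pos.ne') (by omega : d ≠ 0),
      Finsupp.add_apply, hp.factorization_pow, Nat.factorization_eq_zero_of_not_dvd hpd]
    simp
  · intro i hi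
    rw [← htay, taylor_coeff]
    exact hdiv i hi
  · rw [← htay, taylor_coeff]
    exact hnotdiv hk2
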